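/- For every 3CNF system (A, a) over n ≥ 1 variables and every η ∈ (0,1], v(P_lex(A, a)) = v(P_weight(A, a, η)). -/
import Mathlib

noncomputable section

/-- The tuple type `(z, f, s, t, u)` of five vectors in `ℝ^m`. -/
abbrev Tup (m : ℕ) : Type :=
  (Fin m → ℝ) × (Fin m → ℝ) × (Fin m → ℝ) × (Fin m → ℝ) × (Fin m → ℝ)

def Tz {m : ℕ} (p : Tup m) : Fin m → ℝ := p.1
def Tf {m : ℕ} (p : Tup m) : Fin m → ℝ := p.2.1
def Ts {m : ℕ} (p : Tup m) : Fin m → ℝ := p.2.2.1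
def Tt {m : ℕ} (p : Tup m) : Fin m → ℝ := p.2.2.2.1
def Tu {m : ℕ} (p : Tup m) : Fin m → ℝ := p.2.2.2.2

/-- The feasible set `Flex(m, θ)`. -/
def Flex (m : ℕ) (θ : ℝ) : Set (Tup m) :=
  { p | (∀ i : Fin m, i.val = m - 1 → Tu p i = θ) ∧
        (∀ i : Fin m,
          (3 / 2) * Tu p i - 1 / 2 ≤ Ts p i ∧
          (3 / 2) * Tu p i - 1 ≤ Tt p i ∧
          Tz p i = 2 * (Ts p i - Tt p i) ∧
          -(Tf p i) ≤ Tz p i - 1 / 2 ∧ Tz p i - 1 / 2 ≤ Tf p i ∧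
          0 ≤ Tz p i ∧ Tz p i ≤ 1 ∧ 0 ≤ Tf p i ∧ Tf p i ≤ 1 ∧
          0 ≤ Ts p i ∧ Ts p i ≤ 1 ∧ 0 ≤ Tt p i ∧ Tt p i ≤ 1 ∧
          0 ≤ Tu p i ∧ Tu p i ≤ 1) ∧
        (∀ i : Fin m, 1 ≤ i.val →
          Tu p ⟨i.val - 1, Nat.lt_of_le_of_lt (Nat.sub_le _ _) i.isLt⟩ =
            3 * Tu p i - 2 * Tz p i) }

/-- The set of minimizers of `g` over `S`. -/
def argminOn {α : Type} (g : α → ℝ) (S : Set α) : Set α :=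
  {x ∈ S | ∀ y ∈ S, g x ≤ g y}

/-- The lexicographic optimal set `Slex(m, θ)`: first minimize `s_m + t_m`, then
`s_{m-1} + t_{m-1}`, …, then `s_1 + t_1`, and finally `∑ f_i` over `Flex(m, θ)`. -/
def Slex (m : ℕ) (θ : ℝ) : Set (Tup m) :=
  argminOn (fun p => ∑ i : Fin m, Tf p i)
    ((List.finRange m).reverse.foldl
      (fun S i => argminOn (fun p => Ts p i + Tt p i) S) (Flex m θ))
/-- `(A, a)` is a 3CNF system. -/
def Is3CNF {n p : ℕ} (A : Matrix (Fin p) (Fin n) ℤ) (a : Fin p → ℤ) : Prop :=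
  ∃ P N : Matrix (Fin p) (Fin n) ℤ,
    (∀ j i, 0 ≤ P j i) ∧ (∀ j i, 0 ≤ N j i) ∧ A = P - N ∧
    (∀ j, a j = ∑ i, N j i) ∧ (∀ j, (∑ i, (P j i + N j i)) = 3)

/-- `(A, a)` has a satisfying assignment. -/
def SatAssign {n p : ℕ} (A : Matrix (Fin p) (Fin n) ℤ) (a : Fin p → ℤ) : Prop :=
  ∃ μ : Fin n → ℤ, (∀ i, μ i = 0 ∨ μ i = 1) ∧ ∀ j, 1 - a j ≤ ∑ i, A j i * μ i
/-- The system `B z ≥ b` associated with a 3CNF system `(A, a)`, for `z ∈ ℝ^{n+1}`. -/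
def BzGe {n p : ℕ} (A : Matrix (Fin p) (Fin n) ℤ) (a : Fin p → ℤ) (z : Fin (n + 1) → ℝ) :
    Prop :=
  (∀ j, 3 / 2 - z (Fin.last n) / 2 - (a j : ℝ) ≤ ∑ i : Fin n, (A j i : ℝ) * z i.castSucc) ∧
  (∀ i : Fin n, 1 / 2 - z (Fin.last n) / 2 ≤ z i.castSucc ∧
    z i.castSucc ≤ 1 / 2 + z (Fin.last n) / 2)

/-- The upper-level objective `2 Σ_{i=1}^n (z_{n+1} − 2 f_i) − (2/n) Σ_{i=1}^n f_i`. -/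
def mObj (n : ℕ) (z f : Fin (n + 1) → ℝ) : ℝ :=
  2 * ∑ i : Fin n, (z (Fin.last n) - 2 * f i.castSucc) -
    (2 / (n : ℝ)) * ∑ i : Fin n, f i.castSucc

/-- The weighted lower-level objective
`Σ_{i=1}^m 16^i (s_i + t_i) + η Σ_{i=1}^m 4^{−(m−i)} f_i`. -/
def wObj (m : ℕ) (η : ℝ) (p : Tup m) : ℝ :=
  ∑ i : Fin m, (16 : ℝ) ^ (i.val + 1) * (Ts p i + Tt p i) +
    η * ∑ i : Fin m, (1 / 4 : ℝ) ^ (m - 1 - i.val) * Tf p i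

/-- The feasible set of `P_lex(A, a)`. -/
def FLexProb {n p : ℕ} (A : Matrix (Fin p) (Fin n) ℤ) (a : Fin p → ℤ) :
    Set (ℝ × Tup (n + 1)) :=
  {q | q.1 ∈ Set.Icc (0 : ℝ) 1 ∧ BzGe A a (Tz q.2) ∧ q.2 ∈ Slex (n + 1) q.1}

/-- The feasible set of `P_weight(A, a, η)`. -/
def FWeight {n p : ℕ} (A : Matrix (Fin p) (Fin n) ℤ) (a : Fin p → ℤ) (η : ℝ) :
    Set (ℝ × Tup (n + 1)) :=
  {q | q.1 ∈ Set.Icc (0 : ℝ) 1 ∧ BzGe A a (Tz q.2) ∧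
       q.2 ∈ argminOn (wObj (n + 1) η) (Flex (n + 1) q.1)}


def slb (u : ℝ) : ℝ := max 0 (3 / 2 * u - 1 / 2)
def tlb (u : ℝ) : ℝ := max 0 (3 / 2 * u - 1)
def zst (u : ℝ) : ℝ := 2 * (slb u - tlb u)
def Tm (u : ℝ) : ℝ := 3 * u - 2 * zst u

lemma zst_eq (u : ℝ) : zst u = max 0 (min 1 (3 * u - 1)) := by
  unfold zst slb tlb
  rcases le_total u (1/3) with h | h
  · rw [max_eq_left (by linarith), max_eq_left (by linarith),
      min_eq_right (by linarith), max_eq_left (by linarith)]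
    ring
  · rcases le_total u (2/3) with h2 | h2
    · rw [max_eq_right (by linarith), max_eq_left (by linarith),
        min_eq_right (by linarith), max_eq_right (by linarith)]
      ring
    · rw [max_eq_right (by linarith), max_eq_right (by linarith),
        min_eq_left (by linarith), max_eq_right (by linarith)]
      ring

lemma clamp_abs (a b : ℝ) : |max 0 (min 1 a) - max 0 (min 1 b)| ≤ |a - b| := by
  have h1 : |max 0 (min 1 a) - max 0 (min 1 b)| ≤ |min 1 a - min 1 b| := by
    rw [max_comm 0 (min 1 a), max_comm 0 (min 1 b)]
    exact abs_max_sub_max_le_abs _ _ _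
  refine h1.trans ?_
  have hab := le_abs_self (a - b)
  have hab' := neg_abs_le (a - b)
  rcases le_total a 1 with ha | ha <;> rcases le_total b 1 with hb | hb <;>
    rw [abs_le] <;>
    [rw [min_eq_right ha, min_eq_right hb]; rw [min_eq_right ha, min_eq_left hb];
     rw [min_eq_left ha, min_eq_right hb]; rw [min_eq_left ha, min_eq_left hb]] <;>
    constructor <;> linarith

lemma clamp_mono {a b : ℝ} (h : a ≤ b) : max 0 (min 1 a) ≤ max 0 (min 1 b) :=
  max_le_max le_rfl (min_le_min le_rfl h)

lemma zst_nonneg (u : ℝ) : 0 ≤ zst u := by rw [zst_eq]; exact le_max_left _ _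
lemma zst_le_one (u : ℝ) : zst u ≤ 1 := by
  rw [zst_eq]; exact max_le zero_le_one (min_le_left _ _)

lemma zst_lip (u v : ℝ) : |zst u - zst v| ≤ 3 * |u - v| := by
  rw [zst_eq, zst_eq]
  have := clamp_abs (3 * u - 1) (3 * v - 1)
  have h2 : |3 * u - 1 - (3 * v - 1)| = 3 * |u - v| := by
    rw [show (3 : ℝ) * u - 1 - (3 * v - 1) = 3 * (u - v) by ring, abs_mul,
      abs_of_nonneg (by norm_num : (0:ℝ) ≤ 3)]
  linarith [this, h2.le, h2.ge]

lemma zst_mono {u v : ℝ} (h : u ≤ v) : zst u ≤ zst v := by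
  rw [zst_eq, zst_eq]; exact clamp_mono (by linarith)

lemma Tm_lip (u v : ℝ) : |Tm u - Tm v| ≤ 3 * |u - v| := by
  rcases le_total u v with h | h
  · have h1 : zst u ≤ zst v := zst_mono h
    have h2 : zst v - zst u ≤ 3 * (v - u) := by
      have := zst_lip v u
      rw [abs_of_nonneg (by linarith), abs_of_nonneg (by linarith)] at this
      linarith
    have hv : |u - v| = v - u := by rw [abs_of_nonpos (by linarith)]; ring
    rw [hv, abs_le]; unfold Tm; constructor <;> linarith
  · have h1 : zst v ≤ zst u := zst_mono h
    have h2 : zst u - zst v ≤ 3 * (u - v) := by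
      have := zst_lip u v
      rw [abs_of_nonneg (by linarith), abs_of_nonneg (by linarith)] at this
      linarith
    have hv : |u - v| = u - v := abs_of_nonneg (by linarith)
    rw [hv, abs_le]; unfold Tm; constructor <;> linarith

lemma slb_nonneg (u : ℝ) : 0 ≤ slb u := le_max_left _ _
lemma tlb_nonneg (u : ℝ) : 0 ≤ tlb u := le_max_left _ _
lemma slb_le_one {u : ℝ} (h : u ≤ 1) : slb u ≤ 1 := max_le zero_le_one (by linarith)
lemma tlb_le_one {u : ℝ} (h : u ≤ 1) : tlb u ≤ 1 := max_le zero_le_one (by linarith)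

lemma slb_lip (u v : ℝ) : |slb u - slb v| ≤ 3 / 2 * |u - v| := by
  unfold slb
  rw [max_comm 0 (3/2*u - 1/2), max_comm 0 (3/2*v - 1/2)]
  have := abs_max_sub_max_le_abs (3/2*u - 1/2) (3/2*v - 1/2) 0
  have h2 : |3/2*u - 1/2 - (3/2*v - 1/2)| = 3/2 * |u - v| := by
    rw [show (3:ℝ)/2*u - 1/2 - (3/2*v - 1/2) = 3/2 * (u - v) by ring, abs_mul,
      abs_of_nonneg (by norm_num : (0:ℝ) ≤ 3/2)]
  linarith [h2.le]

lemma tlb_lip (u v : ℝ) : |tlb u - tlb v| ≤ 3 / 2 * |u - v| := by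
  unfold tlb
  rw [max_comm 0 (3/2*u - 1), max_comm 0 (3/2*v - 1)]
  have := abs_max_sub_max_le_abs (3/2*u - 1) (3/2*v - 1) 0
  have h2 : |3/2*u - 1 - (3/2*v - 1)| = 3/2 * |u - v| := by
    rw [show (3:ℝ)/2*u - 1 - (3/2*v - 1) = 3/2 * (u - v) by ring, abs_mul,
      abs_of_nonneg (by norm_num : (0:ℝ) ≤ 3/2)]
  linarith [h2.le]

lemma Tm_mem {u : ℝ} (h0 : 0 ≤ u) (h1 : u ≤ 1) : 0 ≤ Tm u ∧ Tm u ≤ 1 := by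
  unfold Tm; rw [zst_eq]
  rcases le_total u (1/3) with h | h
  · rw [min_eq_right (by linarith), max_eq_left (by linarith)]
    constructor <;> linarith
  · rcases le_total u (2/3) with h2 | h2
    · rw [min_eq_right (by linarith), max_eq_right (by linarith)]
      constructor <;> linarith
    · rw [min_eq_left (by linarith), max_eq_right (by linarith)]
      constructor <;> linarith

/-- The key per-level inequality. -/
lemma key_st {u s t : ℝ} (hs0 : 0 ≤ s) (hs : 3 / 2 * u - 1 / 2 ≤ s)
    (ht0 : 0 ≤ t) (ht : 3 / 2 * u - 1 ≤ t) :
    slb u + tlb u + |2 * (s - t) - zst u| / 2 ≤ s + t := by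
  have h1 : slb u ≤ s := max_le hs0 hs
  have h2 : tlb u ≤ t := max_le ht0 ht
  have h3 : |2 * (s - t) - zst u| ≤ 2 * (s + t - slb u - tlb u) := by
    rw [abs_le]; unfold zst; constructor <;> linarith
  linarith

def ust (m : ℕ) (θ : ℝ) (i : Fin m) : ℝ := Tm^[m - 1 - i.val] θ

def pstar (m : ℕ) (θ : ℝ) : Tup m :=
  (fun i => zst (ust m θ i), fun i => |zst (ust m θ i) - 1 / 2|,
   fun i => slb (ust m θ i), fun i => tlb (ust m θ i), fun i => ust m θ i)

@[simp] lemma Tz_pstar (m : ℕ) (θ : ℝ) (i : Fin m) :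
    Tz (pstar m θ) i = zst (ust m θ i) := rfl
@[simp] lemma Tf_pstar (m : ℕ) (θ : ℝ) (i : Fin m) :
    Tf (pstar m θ) i = |zst (ust m θ i) - 1 / 2| := rfl
@[simp] lemma Ts_pstar (m : ℕ) (θ : ℝ) (i : Fin m) :
    Ts (pstar m θ) i = slb (ust m θ i) := rfl
@[simp] lemma Tt_pstar (m : ℕ) (θ : ℝ) (i : Fin m) :
    Tt (pstar m θ) i = tlb (ust m θ i) := rfl
@[simp] lemma Tu_pstar (m : ℕ) (θ : ℝ) (i : Fin m) :
    Tu (pstar m θ) i = ust m θ i := rfl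

lemma ust_mem {θ : ℝ} (h0 : 0 ≤ θ) (h1 : θ ≤ 1) (m : ℕ) (i : Fin m) :
    0 ≤ ust m θ i ∧ ust m θ i ≤ 1 := by
  have key : ∀ k : ℕ, 0 ≤ Tm^[k] θ ∧ Tm^[k] θ ≤ 1 := by
    intro k; induction k with
    | zero => exact ⟨h0, h1⟩
    | succ k ih =>
      rw [Function.iterate_succ_apply']
      exact Tm_mem ih.1 ih.2
  exact key _

lemma ust_last (m : ℕ) (θ : ℝ) (i : Fin m) (h : i.val = m - 1) : ust m θ i = θ := by
  unfold ust
  rw [h, Nat.sub_self, Function.iterate_zero_apply]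

lemma ust_rec (m : ℕ) (θ : ℝ) (i : Fin m) (h : 1 ≤ i.val)
    (hlt : i.val - 1 < m) : ust m θ ⟨i.val - 1, hlt⟩ = Tm (ust m θ i) := by
  unfold ust
  have hv : m - 1 - (i.val - 1) = (m - 1 - i.val) + 1 := by omega
  simp only [hv, Function.iterate_succ_apply']

lemma pstar_mem (m : ℕ) (θ : ℝ) (h0 : 0 ≤ θ) (h1 : θ ≤ 1) :
    pstar m θ ∈ Flex m θ := by
  refine ⟨fun i hi => ust_last m θ i hi, fun i => ?_, fun i hi => ?_⟩
  · obtain ⟨hu0, hu1⟩ := ust_mem h0 h1 m i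
    simp only [Tz_pstar, Tf_pstar, Ts_pstar, Tt_pstar, Tu_pstar]
    have hz0 := zst_nonneg (ust m θ i)
    have hz1 := zst_le_one (ust m θ i)
    have habs : |zst (ust m θ i) - 1 / 2| ≤ 1 := by rw [abs_le]; constructor <;> linarith
    refine ⟨le_max_right _ _, le_max_right _ _, by unfold zst; ring,
      neg_abs_le _, le_abs_self _, hz0, hz1, abs_nonneg _, habs,
      slb_nonneg _, slb_le_one hu1, tlb_nonneg _, tlb_le_one hu1, hu0, hu1⟩
  · simp only [Tz_pstar, Tu_pstar]
    rw [ust_rec m θ i hi]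
    unfold Tm; ring

def pinned (m : ℕ) (θ : ℝ) (k : ℕ) : Set (Tup m) :=
  {q ∈ Flex m θ | ∀ i : Fin m, k ≤ i.val →
    Ts q i = slb (ust m θ i) ∧ Tt q i = tlb (ust m θ i) ∧ Tu q i = ust m θ i}

lemma pinned_top (m : ℕ) (θ : ℝ) : pinned m θ m = Flex m θ := by
  ext q
  exact ⟨fun h => h.1, fun h => ⟨h, fun i hi => absurd i.isLt (by omega)⟩⟩

lemma pinned_mono (m : ℕ) (θ : ℝ) {k k' : ℕ} (h : k ≤ k') :
    pinned m θ k ⊆ pinned m θ k' :=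
  fun q hq => ⟨hq.1, fun i hi => hq.2 i (le_trans h hi)⟩

lemma pstar_pinned (m : ℕ) (θ : ℝ) (h0 : 0 ≤ θ) (h1 : θ ≤ 1) (k : ℕ) :
    pstar m θ ∈ pinned m θ k :=
  ⟨pstar_mem m θ h0 h1, fun _ _ => ⟨rfl, rfl, rfl⟩⟩

lemma zpin {m : ℕ} {θ : ℝ} {k : ℕ} {q : Tup m} (hq : q ∈ pinned m θ k)
    (i : Fin m) (hi : k ≤ i.val) : Tz q i = zst (ust m θ i) := by
  obtain ⟨-, -, hz, -⟩ := hq.1.2.1 i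
  obtain ⟨hs, ht, -⟩ := hq.2 i hi
  rw [hz, hs, ht]; unfold zst; ring

lemma u_pin (m : ℕ) (θ : ℝ) (j : ℕ) (hj : j < m) {q : Tup m}
    (hq : q ∈ pinned m θ (j + 1)) : Tu q ⟨j, hj⟩ = ust m θ ⟨j, hj⟩ := by
  rcases Nat.lt_or_ge (j + 1) m with hlt | hge
  · have hrec := hq.1.2.2 ⟨j + 1, hlt⟩ (by simp)
    obtain ⟨-, -, hu⟩ := hq.2 ⟨j + 1, hlt⟩ le_rfl
    have hz := zpin hq ⟨j + 1, hlt⟩ le_rfl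
    have hidx : (⟨(j : ℕ) + 1 - 1, Nat.lt_of_le_of_lt (Nat.sub_le _ _) hlt⟩ : Fin m)
        = ⟨j, hj⟩ := rfl
    rw [hidx] at hrec
    have h2 : ust m θ ⟨j, hj⟩ = Tm (ust m θ ⟨j + 1, hlt⟩) :=
      ust_rec m θ ⟨j + 1, hlt⟩ (by simp) (by omega)
    rw [hrec, hu, hz, h2]
    rfl
  · rw [hq.1.1 ⟨j, hj⟩ (show j = m - 1 by omega),
      ust_last m θ _ (show j = m - 1 by omega)]

lemma st_lower {m : ℕ} {θ : ℝ} {q : Tup m} (hq : q ∈ Flex m θ) (i : Fin m) :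
    slb (Tu q i) ≤ Ts q i ∧ tlb (Tu q i) ≤ Tt q i := by
  obtain ⟨h1, h2, -, -, -, -, -, -, -, h10, -, h12, -⟩ := hq.2.1 i
  exact ⟨max_le h10 h1, max_le h12 h2⟩

lemma step_pinned (m : ℕ) (θ : ℝ) (h0 : 0 ≤ θ) (h1 : θ ≤ 1) (j : ℕ) (hj : j < m) :
    argminOn (fun p => Ts p ⟨j, hj⟩ + Tt p ⟨j, hj⟩) (pinned m θ (j + 1))
      = pinned m θ j := by
  ext q
  constructor
  · rintro ⟨hq, hmin⟩
    have hup := u_pin m θ j hj hq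
    have hmin' := hmin (pstar m θ) (pstar_pinned m θ h0 h1 (j + 1))
    simp only [Ts_pstar, Tt_pstar] at hmin'
    obtain ⟨hsl, htl⟩ := st_lower hq.1 ⟨j, hj⟩
    rw [hup] at hsl htl
    have hseq : Ts q ⟨j, hj⟩ = slb (ust m θ ⟨j, hj⟩) := by linarith
    have hteq : Tt q ⟨j, hj⟩ = tlb (ust m θ ⟨j, hj⟩) := by linarith
    refine ⟨hq.1, fun i hi => ?_⟩
    rcases eq_or_lt_of_le hi with heq | hlt
    · have : i = ⟨j, hj⟩ := Fin.ext heq.symm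
      subst this
      exact ⟨hseq, hteq, hup⟩
    · exact hq.2 i hlt
  · intro hq
    refine ⟨pinned_mono m θ (Nat.le_succ j) hq, fun y hy => ?_⟩
    obtain ⟨hs, ht, -⟩ := hq.2 ⟨j, hj⟩ le_rfl
    obtain ⟨hsl, htl⟩ := st_lower hy.1 ⟨j, hj⟩
    rw [u_pin m θ j hj hy] at hsl htl
    show Ts q ⟨j, hj⟩ + Tt q ⟨j, hj⟩ ≤ Ts y ⟨j, hj⟩ + Tt y ⟨j, hj⟩
    rw [hs, ht]
    linarith

lemma foldl_take (m : ℕ) (θ : ℝ) (h0 : 0 ≤ θ) (h1 : θ ≤ 1) :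
    ∀ k, k ≤ m → ((List.finRange m).reverse.take k).foldl
      (fun S i => argminOn (fun p => Ts p i + Tt p i) S) (Flex m θ)
      = pinned m θ (m - k) := by
  intro k
  induction k with
  | zero => intro _; simpa using (pinned_top m θ).symm
  | succ k ih =>
    intro hk1
    have hk : k < m := hk1
    have hlen : k < ((List.finRange m).reverse).length := by simp [hk]
    rw [List.take_succ, List.getElem?_eq_getElem hlen, List.foldl_append,
      ih (le_of_lt hk)]
    have helt : ((List.finRange m).reverse)[k] = (⟨m - 1 - k, by omega⟩ : Fin m) := by
      rw [List.getElem_reverse]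
      ext
      simp
    simp only [Option.toList_some, List.foldl_cons, List.foldl_nil, helt]
    have hmk : m - k = (m - 1 - k) + 1 := by omega
    rw [hmk, step_pinned m θ h0 h1 (m - 1 - k) (by omega),
      show m - 1 - k = m - (k + 1) from by omega]

lemma fstar_le {m : ℕ} {θ : ℝ} {q : Tup m} (hq : q ∈ pinned m θ 0) (i : Fin m) :
    |zst (ust m θ i) - 1 / 2| ≤ Tf q i := by
  obtain ⟨-, -, -, h4, h5, -⟩ := hq.1.2.1 i
  rw [← zpin hq i (Nat.zero_le _)]
  exact abs_le.mpr ⟨by linarith, by linarith⟩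

lemma slex_eq (m : ℕ) (θ : ℝ) (hm : 1 ≤ m) (h0 : 0 ≤ θ) (h1 : θ ≤ 1) :
    Slex m θ = {pstar m θ} := by
  have hfull : (List.finRange m).reverse = ((List.finRange m).reverse).take m := by
    rw [List.take_of_length_le (by simp)]
  unfold Slex
  rw [hfull, foldl_take m θ h0 h1 m le_rfl, Nat.sub_self]
  ext q
  simp only [Set.mem_singleton_iff]
  constructor
  · rintro ⟨hq, hmin⟩
    have hsum := hmin (pstar m θ) (pstar_pinned m θ h0 h1 0)
    have hle : ∀ i ∈ Finset.univ, Tf (pstar m θ) i ≤ Tf q i := fun i _ => fstar_le hq i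
    have heach : ∀ i ∈ Finset.univ, Tf (pstar m θ) i = Tf q i :=
      (Finset.sum_eq_sum_iff_of_le hle).1 (le_antisymm (Finset.sum_le_sum hle) hsum)
    have hz : ∀ i, Tz q i = zst (ust m θ i) := fun i => zpin hq i (Nat.zero_le _)
    obtain ⟨qz, qf, qs, qt, qu⟩ := q
    simp only [pstar, Prod.mk.injEq]
    refine ⟨funext fun i => hz i, funext fun i => (heach i (Finset.mem_univ i)).symm,
      funext fun i => (hq.2 i (Nat.zero_le _)).1,
      funext fun i => (hq.2 i (Nat.zero_le _)).2.1,
      funext fun i => (hq.2 i (Nat.zero_le _)).2.2⟩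
  · rintro rfl
    exact ⟨pstar_pinned m θ h0 h1 0,
      fun y hy => Finset.sum_le_sum fun i _ => fstar_le hy i⟩


def Gtail (m : ℕ) (η : ℝ) (q : Tup m) (k : ℕ) : ℝ :=
  ∑ i ∈ Finset.univ.filter (fun i : Fin m => k ≤ i.val),
    ((16 : ℝ) ^ (i.val + 1) * (Ts q i + Tt q i)
      + η * (1 / 4 : ℝ) ^ (m - 1 - i.val) * Tf q i)

def Sdel (m : ℕ) (q : Tup m) (k : ℕ) : ℝ :=
  ∑ i ∈ Finset.univ.filter (fun i : Fin m => k ≤ i.val), |Tz q i - zst (Tu q i)|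

lemma filter_insert (m k : ℕ) (hk : k < m) :
    Finset.univ.filter (fun i : Fin m => k ≤ i.val)
      = insert ⟨k, hk⟩ (Finset.univ.filter (fun i : Fin m => k + 1 ≤ i.val)) := by
  ext i
  simp only [Finset.mem_filter, Finset.mem_insert, Finset.mem_univ, true_and, Fin.ext_iff]
  omega

lemma not_mem_filter_succ (m k : ℕ) (hk : k < m) :
    (⟨k, hk⟩ : Fin m) ∉ Finset.univ.filter (fun i : Fin m => k + 1 ≤ i.val) := by
  simp

lemma Gtail_split (m : ℕ) (η : ℝ) (q : Tup m) (k : ℕ) (hk : k < m) :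
    Gtail m η q k = ((16 : ℝ) ^ k * 16 * (Ts q ⟨k, hk⟩ + Tt q ⟨k, hk⟩)
      + η * (1 / 4 : ℝ) ^ (m - 1 - k) * Tf q ⟨k, hk⟩) + Gtail m η q (k + 1) := by
  unfold Gtail
  rw [filter_insert m k hk, Finset.sum_insert (not_mem_filter_succ m k hk), pow_succ]

lemma Sdel_split (m : ℕ) (q : Tup m) (k : ℕ) (hk : k < m) :
    Sdel m q k = |Tz q ⟨k, hk⟩ - zst (Tu q ⟨k, hk⟩)| + Sdel m q (k + 1) := by
  unfold Sdel
  rw [filter_insert m k hk, Finset.sum_insert (not_mem_filter_succ m k hk)]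

lemma filter_top_empty (m : ℕ) :
    Finset.univ.filter (fun i : Fin m => m ≤ i.val) = ∅ :=
  Finset.filter_eq_empty_iff.mpr (fun i _ => by omega)

lemma Gtail_empty (m : ℕ) (η : ℝ) (q : Tup m) : Gtail m η q m = 0 := by
  unfold Gtail; rw [filter_top_empty]; simp

lemma Sdel_empty (m : ℕ) (q : Tup m) : Sdel m q m = 0 := by
  unfold Sdel; rw [filter_top_empty]; simp

lemma Sdel_nonneg (m : ℕ) (q : Tup m) (k : ℕ) : 0 ≤ Sdel m q k :=
  Finset.sum_nonneg fun i _ => abs_nonneg _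

lemma wObj_eq_Gtail (m : ℕ) (η : ℝ) (q : Tup m) : wObj m η q = Gtail m η q 0 := by
  unfold wObj Gtail
  rw [Finset.mul_sum, ← Finset.sum_add_distrib,
    Finset.filter_true_of_mem (fun i _ => Nat.zero_le _)]
  exact Finset.sum_congr rfl fun i _ => by ring

lemma st_est (m : ℕ) (θ : ℝ) {q : Tup m} (hq : q ∈ Flex m θ) (i : Fin m) :
    slb (ust m θ i) + tlb (ust m θ i) + |Tz q i - zst (Tu q i)| / 2
      - 3 * |Tu q i - ust m θ i| ≤ Ts q i + Tt q i := by
  obtain ⟨c1, c2, c3, -, -, -, -, -, -, c10, -, c12, -⟩ := hq.2.1 i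
  have key := key_st c10 c1 c12 c2
  rw [← c3] at key
  have ls := abs_le.1 (slb_lip (Tu q i) (ust m θ i))
  have lt := abs_le.1 (tlb_lip (Tu q i) (ust m θ i))
  linarith [ls.1, lt.1, key]

lemma f_est (m : ℕ) (θ : ℝ) {q : Tup m} (hq : q ∈ Flex m θ) (i : Fin m) :
    |zst (ust m θ i) - 1 / 2| - (|Tz q i - zst (Tu q i)| + 3 * |Tu q i - ust m θ i|)
      ≤ Tf q i := by
  obtain ⟨-, -, -, c4, c5, -⟩ := hq.2.1 i
  have h1 : |Tz q i - 1 / 2| ≤ Tf q i := abs_le.mpr ⟨by linarith, by linarith⟩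
  have h2 : |zst (ust m θ i) - 1 / 2| - |Tz q i - 1 / 2|
      ≤ |zst (ust m θ i) - Tz q i| := by
    have h := abs_sub_abs_le_abs_sub (zst (ust m θ i) - 1 / 2) (Tz q i - 1 / 2)
    have he : zst (ust m θ i) - 1 / 2 - (Tz q i - 1 / 2) = zst (ust m θ i) - Tz q i := by
      ring
    rwa [he] at h
  have h3 := abs_sub_le (zst (ust m θ i)) (zst (Tu q i)) (Tz q i)
  have h4 := zst_lip (ust m θ i) (Tu q i)
  have h5 : |ust m θ i - Tu q i| = |Tu q i - ust m θ i| := abs_sub_comm _ _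
  have h6 : |zst (Tu q i) - Tz q i| = |Tz q i - zst (Tu q i)| := abs_sub_comm _ _
  linarith

lemma drift (u w z : ℝ) :
    |(3 * u - 2 * z) - (3 * w - 2 * zst w)| ≤ 3 * |u - w| + 2 * |z - zst u| := by
  have h1 : (3 * u - 2 * z) - (3 * w - 2 * zst w)
      = (Tm u - Tm w) - 2 * (z - zst u) := by unfold Tm; ring
  rw [h1]
  have h2 := abs_sub (Tm u - Tm w) (2 * (z - zst u))
  have h3 : |2 * (z - zst u)| = 2 * |z - zst u| := by
    rw [abs_mul, abs_of_nonneg (by norm_num : (0:ℝ) ≤ 2)]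
  have h4 := Tm_lip u w
  linarith

lemma weight_small (m k : ℕ) (η : ℝ) (hm : 2 ≤ m) (hk : k < m) (hη0 : 0 ≤ η)
    (hη1 : η ≤ 1) : η * (1 / 4 : ℝ) ^ (m - 1 - k) ≤ (16 : ℝ) ^ k / 4 := by
  have hp0 : (0:ℝ) < (1/4 : ℝ) ^ (m - 1 - k) := by positivity
  have hp1 : ((1:ℝ)/4) ^ (m - 1 - k) ≤ 1 :=
    pow_le_one₀ (by norm_num) (by norm_num)
  have hηw : η * (1 / 4 : ℝ) ^ (m - 1 - k) ≤ (1/4 : ℝ) ^ (m - 1 - k) := by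
    nlinarith
  rcases Nat.lt_or_ge k (m - 1) with hlt | hge
  · have he : 1 ≤ m - 1 - k := by omega
    have : ((1:ℝ)/4) ^ (m - 1 - k) ≤ (1/4 : ℝ) ^ 1 :=
      pow_le_pow_of_le_one (by norm_num) (by norm_num) he
    have h16 : (1:ℝ) ≤ (16:ℝ) ^ k := one_le_pow₀ (by norm_num)
    calc η * (1 / 4 : ℝ) ^ (m - 1 - k) ≤ (1/4 : ℝ) ^ 1 := le_trans hηw this
    _ ≤ (16 : ℝ) ^ k / 4 := by rw [pow_one]; linarith
  · have hke : 1 ≤ k := by omega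
    have h16 : (16:ℝ) ^ 1 ≤ (16:ℝ) ^ k := pow_le_pow_right₀ (by norm_num) hke
    calc η * (1 / 4 : ℝ) ^ (m - 1 - k) ≤ 1 := by nlinarith
    _ ≤ (16 : ℝ) ^ k / 4 := by rw [pow_one] at h16; linarith

lemma core_arith (W v D δ d sq slbw fq fstar S' G Gp : ℝ)
    (hW : 1 ≤ W) (hv0 : 0 ≤ v) (hv : v ≤ W / 4)
    (hst : slbw + δ / 2 - 3 * d ≤ sq)
    (hf : fstar - (δ + 3 * d) ≤ fq)
    (hD : D ≤ 3 * d + 2 * δ) (hδ0 : 0 ≤ δ) (hd0 : 0 ≤ d)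
    (hIH : 19 / 5 * (W * 16) * d + 1 / 10 * S' + Gp ≤ G) :
    19 / 5 * W * D + 1 / 10 * (δ + S') + (W * 16 * slbw + v * fstar + Gp)
      ≤ W * 16 * sq + v * fq + G := by
  have hW0 : (0:ℝ) ≤ W := by linarith
  have h1 : W * 16 * (slbw + δ / 2 - 3 * d) ≤ W * 16 * sq :=
    mul_le_mul_of_nonneg_left hst (by linarith)
  have h2 : v * (fstar - (δ + 3 * d)) ≤ v * fq := mul_le_mul_of_nonneg_left hf hv0
  have h3 : W * D ≤ W * (3 * d + 2 * δ) := mul_le_mul_of_nonneg_left hD hW0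
  have h4 : v * δ ≤ W / 4 * δ := mul_le_mul_of_nonneg_right hv hδ0
  have h5 : v * d ≤ W / 4 * d := mul_le_mul_of_nonneg_right hv hd0
  have h6 : δ ≤ W * δ := le_mul_of_one_le_left hδ0 hW
  have h7 : (0:ℝ) ≤ W * d := mul_nonneg hW0 hd0
  nlinarith [h1, h2, h3, h4, h5, h6, h7]

lemma tail_bound (m : ℕ) (θ η : ℝ) (h0 : 0 ≤ θ) (h1 : θ ≤ 1) (hm : 2 ≤ m)
    (hη0 : 0 ≤ η) (hη1 : η ≤ 1) :
    ∀ (j k : ℕ) (hk : k + j + 1 = m), ∀ q ∈ Flex m θ,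
      19 / 5 * (16 : ℝ) ^ k *
          |(3 * Tu q ⟨k, by omega⟩ - 2 * Tz q ⟨k, by omega⟩)
            - (3 * ust m θ ⟨k, by omega⟩ - 2 * zst (ust m θ ⟨k, by omega⟩))|
        + 1 / 10 * Sdel m q k + Gtail m η (pstar m θ) k ≤ Gtail m η q k := by
  intro j
  induction j with
  | zero =>
    intro k hk q hq
    have hklt : k < m := by omega
    have hkm : k + 1 = m := by omega
    have hd : Tu q ⟨k, hklt⟩ = ust m θ ⟨k, hklt⟩ := by
      rw [hq.1 ⟨k, hklt⟩ (show k = m - 1 by omega),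
        ust_last m θ _ (show k = m - 1 by omega)]
    have hdz : |Tu q ⟨k, hklt⟩ - ust m θ ⟨k, hklt⟩| = 0 := by
      rw [hd, sub_self, abs_zero]
    have hG1 : Gtail m η q (k + 1) = 0 := by rw [hkm]; exact Gtail_empty m η q
    have hG2 : Gtail m η (pstar m θ) (k + 1) = 0 := by
      rw [hkm]; exact Gtail_empty m η (pstar m θ)
    have hS : Sdel m q (k + 1) = 0 := by rw [hkm]; exact Sdel_empty m q
    rw [Gtail_split m η q k hklt, Gtail_split m η (pstar m θ) k hklt,
      Sdel_split m q k hklt, hG1, hG2, hS]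
    simp only [Ts_pstar, Tt_pstar, Tf_pstar]
    exact core_arith ((16:ℝ)^k) (η * (1/4:ℝ)^(m-1-k)) _ _ _ _ _ _ _ _ _ _
      (one_le_pow₀ (by norm_num)) (by positivity)
      (weight_small m k η hm hklt hη0 hη1)
      (st_est m θ hq ⟨k, hklt⟩) (f_est m θ hq ⟨k, hklt⟩)
      ((drift _ _ _).trans (by rw [hdz]))
      (abs_nonneg _) (abs_nonneg _)
      (by rw [hdz]; norm_num)
  | succ j ih =>
    intro k hk q hq
    have hklt : k < m := by omega
    have hk1lt : k + 1 < m := by omega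
    have IH := ih (k + 1) (by omega) q hq
    -- identify the drift term of IH with |Tu q ⟨k⟩ - ust ⟨k⟩|
    have hrec := hq.2.2 ⟨k + 1, hk1lt⟩ (by simp)
    have hidx : (⟨k + 1 - 1, Nat.lt_of_le_of_lt (Nat.sub_le _ _) hk1lt⟩ : Fin m)
        = ⟨k, hklt⟩ := rfl
    rw [hidx] at hrec
    have hustrec : ust m θ ⟨k, hklt⟩ = Tm (ust m θ ⟨k + 1, hk1lt⟩) :=
      ust_rec m θ ⟨k + 1, hk1lt⟩ (by simp) (by omega)
    have hIH2 : 19 / 5 * ((16:ℝ)^k * 16) * |Tu q ⟨k, hklt⟩ - ust m θ ⟨k, hklt⟩|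
        + 1 / 10 * Sdel m q (k + 1) + Gtail m η (pstar m θ) (k + 1)
        ≤ Gtail m η q (k + 1) := by
      have heq : |3 * Tu q ⟨k+1, hk1lt⟩ - 2 * Tz q ⟨k+1, hk1lt⟩
          - (3 * ust m θ ⟨k+1, hk1lt⟩ - 2 * zst (ust m θ ⟨k+1, hk1lt⟩))|
          = |Tu q ⟨k, hklt⟩ - ust m θ ⟨k, hklt⟩| := by
        rw [← hrec, hustrec]
        unfold Tm
        ring_nf
      rw [← pow_succ]
      calc 19 / 5 * (16:ℝ)^(k+1) * |Tu q ⟨k, hklt⟩ - ust m θ ⟨k, hklt⟩|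
          + 1 / 10 * Sdel m q (k + 1) + Gtail m η (pstar m θ) (k + 1)
          = 19 / 5 * (16:ℝ)^(k+1) *
            |3 * Tu q ⟨k+1, hk1lt⟩ - 2 * Tz q ⟨k+1, hk1lt⟩
            - (3 * ust m θ ⟨k+1, hk1lt⟩ - 2 * zst (ust m θ ⟨k+1, hk1lt⟩))|
          + 1 / 10 * Sdel m q (k + 1) + Gtail m η (pstar m θ) (k + 1) := by rw [heq]
        _ ≤ Gtail m η q (k + 1) := IH
    rw [Gtail_split m η q k hklt, Gtail_split m η (pstar m θ) k hklt,
      Sdel_split m q k hklt]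
    simp only [Ts_pstar, Tt_pstar, Tf_pstar]
    exact core_arith ((16:ℝ)^k) (η * (1/4:ℝ)^(m-1-k)) _ _ _ _ _ _ _ _ _ _
      (one_le_pow₀ (by norm_num)) (by positivity)
      (weight_small m k η hm hklt hη0 hη1)
      (st_est m θ hq ⟨k, hklt⟩) (f_est m θ hq ⟨k, hklt⟩)
      (drift _ _ _)
      (abs_nonneg _) (abs_nonneg _)
      hIH2


lemma wmin_eq (m : ℕ) (θ η : ℝ) (hm : 2 ≤ m) (h0 : 0 ≤ θ) (h1 : θ ≤ 1)
    (hη0 : 0 < η) (hη1 : η ≤ 1) :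
    argminOn (wObj m η) (Flex m θ) = {pstar m θ} := by
  have htb := tail_bound m θ η h0 h1 hm (le_of_lt hη0) hη1 (m - 1) 0 (by omega)
  have key : ∀ y ∈ Flex m θ,
      1 / 10 * Sdel m y 0 + wObj m η (pstar m θ) ≤ wObj m η y := by
    intro y hy
    have hb := htb y hy
    rw [← wObj_eq_Gtail, ← wObj_eq_Gtail] at hb
    have hpos : 0 ≤ 19 / 5 * (16:ℝ)^0 *
        |3 * Tu y ⟨0, by omega⟩ - 2 * Tz y ⟨0, by omega⟩
          - (3 * ust m θ ⟨0, by omega⟩ - 2 * zst (ust m θ ⟨0, by omega⟩))| := by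
      positivity
    linarith
  ext q
  simp only [Set.mem_singleton_iff]
  constructor
  · rintro ⟨hqF, hqmin⟩
    have hle : wObj m η q ≤ wObj m η (pstar m θ) :=
      hqmin (pstar m θ) (pstar_mem m θ h0 h1)
    have hSdel0 : Sdel m q 0 = 0 :=
      le_antisymm (by have := key q hqF; linarith) (Sdel_nonneg m q 0)
    have hzd : ∀ i : Fin m, Tz q i = zst (Tu q i) := by
      intro i
      have hmem : i ∈ Finset.univ.filter (fun i : Fin m => 0 ≤ i.val) := by simp
      have h := (Finset.sum_eq_zero_iff_of_nonneg (fun i _ => abs_nonneg _)).1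
        hSdel0 i hmem
      have h2 := abs_eq_zero.1 h
      linarith
    have hueq : ∀ (j : ℕ) (i : Fin m), i.val + j = m - 1 → Tu q i = ust m θ i := by
      intro j
      induction j with
      | zero =>
        intro i hi
        rw [hqF.1 i (by omega), ust_last m θ i (by omega)]
      | succ j ih =>
        intro i hi
        have hlt : i.val + 1 < m := by omega
        have hrec := hqF.2.2 ⟨i.val + 1, hlt⟩ (by simp)
        have hidx : (⟨i.val + 1 - 1, Nat.lt_of_le_of_lt (Nat.sub_le _ _) hlt⟩ : Fin m)
            = i := by ext; simp
        rw [hidx] at hrec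
        have hu1 := ih ⟨i.val + 1, hlt⟩ (show i.val + 1 + j = m - 1 by omega)
        have hz1 := hzd ⟨i.val + 1, hlt⟩
        have hur : ust m θ i = Tm (ust m θ ⟨i.val + 1, hlt⟩) := by
          have h := ust_rec m θ ⟨i.val + 1, hlt⟩ (by simp) (by omega)
          rw [← h]
          exact congrArg (ust m θ) (by ext; simp)
        rw [hrec, hz1, hu1, hur]
        rfl
    have huall : ∀ i : Fin m, Tu q i = ust m θ i :=
      fun i => hueq (m - 1 - i.val) i (by omega)
    have hzall : ∀ i : Fin m, Tz q i = zst (ust m θ i) := fun i => by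
      rw [hzd i, huall i]
    have hsge : ∀ i : Fin m, slb (ust m θ i) ≤ Ts q i ∧ tlb (ust m θ i) ≤ Tt q i :=
      fun i => by have h := st_lower hqF i; rwa [huall i] at h
    have hfge : ∀ i : Fin m, |zst (ust m θ i) - 1 / 2| ≤ Tf q i := fun i => by
      obtain ⟨-, -, -, c4, c5, -⟩ := hqF.2.1 i
      rw [← hzall i]
      exact abs_le.mpr ⟨by linarith, by linarith⟩
    -- sum comparisons
    have hAle : ∀ i ∈ Finset.univ, (16:ℝ)^(i.val+1) * (Ts (pstar m θ) i + Tt (pstar m θ) i)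
        ≤ (16:ℝ)^(i.val+1) * (Ts q i + Tt q i) := by
      intro i _
      have := hsge i
      apply mul_le_mul_of_nonneg_left _ (by positivity)
      simp only [Ts_pstar, Tt_pstar]
      linarith [this.1, this.2]
    have hFle : ∀ i ∈ Finset.univ, ((1:ℝ)/4)^(m-1-i.val) * Tf (pstar m θ) i
        ≤ ((1:ℝ)/4)^(m-1-i.val) * Tf q i := by
      intro i _
      apply mul_le_mul_of_nonneg_left _ (by positivity)
      simpa only [Tf_pstar] using hfge i
    have hA : ∑ i : Fin m, (16:ℝ)^(i.val+1) * (Ts (pstar m θ) i + Tt (pstar m θ) i)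
        ≤ ∑ i : Fin m, (16:ℝ)^(i.val+1) * (Ts q i + Tt q i) :=
      Finset.sum_le_sum hAle
    have hF : ∑ i : Fin m, ((1:ℝ)/4)^(m-1-i.val) * Tf (pstar m θ) i
        ≤ ∑ i : Fin m, ((1:ℝ)/4)^(m-1-i.val) * Tf q i :=
      Finset.sum_le_sum hFle
    have hFη : η * ∑ i : Fin m, ((1:ℝ)/4)^(m-1-i.val) * Tf (pstar m θ) i
        ≤ η * ∑ i : Fin m, ((1:ℝ)/4)^(m-1-i.val) * Tf q i :=
      mul_le_mul_of_nonneg_left hF (le_of_lt hη0)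
    unfold wObj at hle
    have hAeq : ∑ i : Fin m, (16:ℝ)^(i.val+1) * (Ts (pstar m θ) i + Tt (pstar m θ) i)
        = ∑ i : Fin m, (16:ℝ)^(i.val+1) * (Ts q i + Tt q i) := by linarith
    have hFeq : ∑ i : Fin m, ((1:ℝ)/4)^(m-1-i.val) * Tf (pstar m θ) i
        = ∑ i : Fin m, ((1:ℝ)/4)^(m-1-i.val) * Tf q i := by
      have hηF : η * ∑ i : Fin m, ((1:ℝ)/4)^(m-1-i.val) * Tf (pstar m θ) i
          = η * ∑ i : Fin m, ((1:ℝ)/4)^(m-1-i.val) * Tf q i := by linarith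
      exact mul_left_cancel₀ (ne_of_gt hη0) hηF
    have hApt := (Finset.sum_eq_sum_iff_of_le hAle).1 hAeq
    have hFpt := (Finset.sum_eq_sum_iff_of_le hFle).1 hFeq
    have hstq : ∀ i : Fin m, Ts q i = slb (ust m θ i) ∧ Tt q i = tlb (ust m θ i) := by
      intro i
      have h := hApt i (Finset.mem_univ i)
      have hp : ((16:ℝ)^(i.val+1)) ≠ 0 := by positivity
      have h2 : Ts (pstar m θ) i + Tt (pstar m θ) i = Ts q i + Tt q i :=
        mul_left_cancel₀ hp h
      simp only [Ts_pstar, Tt_pstar] at h2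
      obtain ⟨hs, ht⟩ := hsge i
      constructor <;> linarith
    have hfq : ∀ i : Fin m, Tf q i = |zst (ust m θ i) - 1 / 2| := by
      intro i
      have h := hFpt i (Finset.mem_univ i)
      have hp : (((1:ℝ)/4)^(m-1-i.val)) ≠ 0 := by positivity
      have h2 : Tf (pstar m θ) i = Tf q i := mul_left_cancel₀ hp h
      simp only [Tf_pstar] at h2
      exact h2.symm
    obtain ⟨qz, qf, qs, qt, qu⟩ := q
    simp only [pstar, Prod.mk.injEq]
    exact ⟨funext fun i => hzall i, funext fun i => hfq i,
      funext fun i => (hstq i).1, funext fun i => (hstq i).2,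
      funext fun i => huall i⟩
  · rintro rfl
    refine ⟨pstar_mem m θ h0 h1, fun y hy => ?_⟩
    have hk := key y hy
    have hS := Sdel_nonneg m y 0
    show wObj m η (pstar m θ) ≤ wObj m η y
    linarith

/-- for every 3CNF system `(A, a)` over `n ≥ 1` variables and every
`η ∈ (0,1]`, `v(P_lex(A, a)) = v(P_weight(A, a, η))`. -/
theorem stmt11 (n p : ℕ) (hn : 1 ≤ n)
    (A : Matrix (Fin p) (Fin n) ℤ) (a : Fin p → ℤ) (h3 : Is3CNF A a)
    (η : ℝ) (hη : η ∈ Set.Ioc (0 : ℝ) 1) :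
    sInf ((fun q => ((mObj n (Tz q.2) (Tf q.2) : ℝ) : EReal)) '' FLexProb A a) =
    sInf ((fun q => ((mObj n (Tz q.2) (Tf q.2) : ℝ) : EReal)) '' FWeight A a η) := by
  obtain ⟨hη0, hη1⟩ := hη
  have hset : FLexProb A a = FWeight A a η := by
    ext q
    simp only [FLexProb, FWeight, Set.mem_setOf_eq]
    constructor
    · rintro ⟨hI, hB, hS⟩
      refine ⟨hI, hB, ?_⟩
      rw [wmin_eq (n + 1) q.1 η (by omega) hI.1 hI.2 hη0 hη1]
      rwa [slex_eq (n + 1) q.1 (by omega) hI.1 hI.2] at hS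
    · rintro ⟨hI, hB, hS⟩
      refine ⟨hI, hB, ?_⟩
      rw [slex_eq (n + 1) q.1 (by omega) hI.1 hI.2]
      rwa [wmin_eq (n + 1) q.1 η (by omega) hI.1 hI.2 hη0 hη1] at hS
  rw [hset]
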